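/- Let f be the CDF of N(0, σ²). Then sup_{|x|≤α} |f'(x)|/(f(x)(1-f(x))) ≤ 8(α + σ)/σ². -/

import Mathlib

/-!
Write `φ` and `Φ` for the standard normal density and distribution function, so that
`f' x / (f x (1 - f x)) = φ t / (σ Φ t (1 - Φ t))` with `t = x / σ`. By the symmetry
`Φ (-t) = 1 - Φ t` it suffices to treat `t ≥ 0`, where `Φ t ≥ 1/2` and the claim reduces to the
tail bound `φ t ≤ 4 (t + 1) (1 - Φ t)`. For that, integrate `φ` over `[t, t + c]` with
`c = 1 / (2 (t + 1))`: `φ` decreases there, and `φ (t + c) = φ t · exp (-(t c + c²/2))` with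
`t c + c²/2 ≤ 5/8 < log 2`, so `1 - Φ t ≥ c φ (t + c) ≥ c φ t / 2`.
-/

open Real

noncomputable def stdNormalPDF (t : ℝ) : ℝ := (Real.sqrt (2 * Real.pi))⁻¹ * Real.exp (-t ^ 2 / 2)

noncomputable def stdNormalCDF (x : ℝ) : ℝ := ∫ t in Set.Iic x, stdNormalPDF t

open MeasureTheory ProbabilityTheory Set

lemma stdNormalPDF_eq_gaussianPDFReal : stdNormalPDF = gaussianPDFReal 0 1 := by
  ext t
  simp [stdNormalPDF, gaussianPDFReal]

lemma stdNormalPDF_pos (t : ℝ) : 0 < stdNormalPDF t := by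
  rw [stdNormalPDF_eq_gaussianPDFReal]
  exact gaussianPDFReal_pos _ _ _ one_ne_zero

lemma continuous_stdNormalPDF : Continuous stdNormalPDF := by
  unfold stdNormalPDF
  fun_prop

lemma integrable_stdNormalPDF : Integrable stdNormalPDF := by
  rw [stdNormalPDF_eq_gaussianPDFReal]
  exact integrable_gaussianPDFReal _ _

lemma integral_stdNormalPDF : ∫ t, stdNormalPDF t = 1 := by
  rw [stdNormalPDF_eq_gaussianPDFReal]
  exact integral_gaussianPDFReal_eq_one _ one_ne_zero

lemma stdNormalPDF_neg (t : ℝ) : stdNormalPDF (-t) = stdNormalPDF t := by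
  simp [stdNormalPDF]

lemma stdNormalPDF_add (t c : ℝ) :
    stdNormalPDF (t + c) = stdNormalPDF t * exp (-(t * c + c ^ 2 / 2)) := by
  rw [stdNormalPDF, stdNormalPDF, mul_assoc, ← exp_add]
  ring_nf

lemma antitoneOn_stdNormalPDF : AntitoneOn stdNormalPDF (Ici 0) := by
  intro a ha b _ hab
  have hsq : a ^ 2 ≤ b ^ 2 := pow_le_pow_left₀ ha hab 2
  unfold stdNormalPDF
  gcongr

lemma stdNormalPDF_div_two_le_add {t c : ℝ} (h : t * c + c ^ 2 / 2 ≤ log 2) :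
    stdNormalPDF t / 2 ≤ stdNormalPDF (t + c) := by
  have : (2 : ℝ)⁻¹ ≤ exp (-(t * c + c ^ 2 / 2)) := by
    calc (2 : ℝ)⁻¹ = exp (-log 2) := by rw [exp_neg, exp_log two_pos]
      _ ≤ _ := exp_le_exp.mpr (neg_le_neg h)
  rw [stdNormalPDF_add, div_eq_mul_inv]
  gcongr
  exact (stdNormalPDF_pos t).le

lemma stdNormalCDF_sub (a b : ℝ) :
    stdNormalCDF b - stdNormalCDF a = ∫ t in a..b, stdNormalPDF t := by
  rw [stdNormalCDF, stdNormalCDF, intervalIntegral.integral_Iic_sub_Iic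
    integrable_stdNormalPDF.integrableOn integrable_stdNormalPDF.integrableOn]

lemma strictMono_stdNormalCDF : StrictMono stdNormalCDF := by
  intro a b hab
  have := intervalIntegral.intervalIntegral_pos_of_pos_on
    (continuous_stdNormalPDF.intervalIntegrable a b) (fun t _ ↦ stdNormalPDF_pos t) hab
  linarith [stdNormalCDF_sub a b]

lemma stdNormalCDF_add_integral_Ioi (x : ℝ) :
    stdNormalCDF x + ∫ t in Ioi x, stdNormalPDF t = 1 := by
  rw [stdNormalCDF, intervalIntegral.integral_Iic_add_Ioi integrable_stdNormalPDF.integrableOn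
    integrable_stdNormalPDF.integrableOn, integral_stdNormalPDF]

lemma stdNormalCDF_neg (x : ℝ) : stdNormalCDF (-x) = 1 - stdNormalCDF x := by
  have := integral_comp_neg_Iic (-x) stdNormalPDF
  simp only [neg_neg, stdNormalPDF_neg] at this
  rw [stdNormalCDF, this, ← stdNormalCDF_add_integral_Ioi x, add_sub_cancel_left]

lemma stdNormalCDF_zero : stdNormalCDF 0 = 1 / 2 := by
  have := stdNormalCDF_neg 0
  rw [neg_zero] at this
  linarith

lemma stdNormalCDF_pos (x : ℝ) : 0 < stdNormalCDF x := by
  have : 0 ≤ stdNormalCDF (x - 1) :=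
    setIntegral_nonneg measurableSet_Iic fun t _ ↦ (stdNormalPDF_pos t).le
  exact this.trans_lt (strictMono_stdNormalCDF (sub_one_lt x))

lemma stdNormalCDF_lt_one (x : ℝ) : stdNormalCDF x < 1 := by
  linarith [stdNormalCDF_pos (-x), stdNormalCDF_neg x]

lemma hasDerivAt_stdNormalCDF (x : ℝ) : HasDerivAt stdNormalCDF (stdNormalPDF x) x := by
  have : stdNormalCDF = fun u ↦ stdNormalCDF 0 + ∫ t in (0 : ℝ)..u, stdNormalPDF t := by
    ext u
    linarith [stdNormalCDF_sub 0 u]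
  rw [this]
  exact (continuous_stdNormalPDF.integral_hasStrictDerivAt 0 x).hasDerivAt.const_add _

lemma mul_stdNormalPDF_add_le_sub_stdNormalCDF {t c : ℝ} (ht : 0 ≤ t) (hc : 0 ≤ c) :
    c * stdNormalPDF (t + c) ≤ stdNormalCDF (t + c) - stdNormalCDF t := by
  have := intervalIntegral.integral_mono_on (by linarith) (intervalIntegrable_const (μ := volume))
    (continuous_stdNormalPDF.intervalIntegrable t (t + c)) fun s hs ↦
      antitoneOn_stdNormalPDF (ht.trans hs.1) (by simp; linarith) hs.2
  simpa [stdNormalCDF_sub] using this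

lemma stdNormalPDF_le_mul_one_sub_stdNormalCDF {t : ℝ} (ht : 0 ≤ t) :
    stdNormalPDF t ≤ 4 * (t + 1) * (1 - stdNormalCDF t) := by
  set c := 1 / (2 * (t + 1)) with hc
  have hc0 : 0 < c := by positivity
  have hct : c * (t + 1) = 1 / 2 := by rw [hc]; field_simp
  have hexp : t * c + c ^ 2 / 2 ≤ log 2 := by
    have : c ≤ 1 / 2 := by rw [hc, div_le_div_iff₀ (by positivity) two_pos]; linarith
    nlinarith [log_two_gt_d9]
  have hhalf := stdNormalPDF_div_two_le_add hexp
  have hinc := mul_stdNormalPDF_add_le_sub_stdNormalCDF ht hc0.le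
  have hle := stdNormalCDF_lt_one (t + c)
  have hcφ : c * stdNormalPDF t ≤ 2 * (1 - stdNormalCDF t) := by nlinarith
  calc stdNormalPDF t = 2 * (t + 1) * (c * stdNormalPDF t) := by
        linear_combination (-2 * stdNormalPDF t) * hct
    _ ≤ 2 * (t + 1) * (2 * (1 - stdNormalCDF t)) := by gcongr
    _ = 4 * (t + 1) * (1 - stdNormalCDF t) := by ring

lemma stdNormalPDF_le_mul_stdNormalCDF_mul_one_sub (t : ℝ) :
    stdNormalPDF t ≤ 8 * (|t| + 1) * (stdNormalCDF t * (1 - stdNormalCDF t)) := by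
  wlog ht : 0 ≤ t generalizing t
  · have := this (-t) (by linarith)
    rwa [stdNormalPDF_neg, abs_neg, stdNormalCDF_neg, sub_sub_cancel, mul_comm (1 - _)] at this
  have hhalf : 1 / 2 ≤ stdNormalCDF t := stdNormalCDF_zero ▸ strictMono_stdNormalCDF.monotone ht
  have htail := stdNormalPDF_le_mul_one_sub_stdNormalCDF ht
  have htail_nonneg : 0 ≤ 4 * (t + 1) * (1 - stdNormalCDF t) :=
    htail.trans' (stdNormalPDF_pos t).le
  rw [abs_of_nonneg ht]
  nlinarith

lemma deriv_stdNormalCDF_div (σ x : ℝ) :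
    deriv (fun x ↦ stdNormalCDF (x / σ)) x = stdNormalPDF (x / σ) / σ := by
  have hdiv : HasDerivAt (fun y ↦ y / σ) (1 / σ) x := (hasDerivAt_id' x).div_const σ
  exact ((hasDerivAt_stdNormalCDF (x / σ)).comp x hdiv).deriv.trans (mul_one_div _ _)

theorem stmt10_general (σ α : ℝ) (hσ : 0 < σ)
    (f : ℝ → ℝ) (hf : ∀ x, f x = stdNormalCDF (x / σ)) :
    ∀ x, |x| ≤ α → |deriv f x| / (f x * (1 - f x)) ≤ 8 * (α + σ) / σ ^ 2 := by
  intro x hx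
  obtain rfl : f = fun x ↦ stdNormalCDF (x / σ) := funext hf
  set t := x / σ
  have hD : 0 < stdNormalCDF t * (1 - stdNormalCDF t) :=
    mul_pos (stdNormalCDF_pos t) (sub_pos.mpr (stdNormalCDF_lt_one t))
  have ht : (|t| + 1) / σ = (|x| + σ) / σ ^ 2 := by
    rw [abs_div, abs_of_pos hσ]
    field_simp
  rw [deriv_stdNormalCDF_div, abs_of_pos (div_pos (stdNormalPDF_pos t) hσ), div_le_iff₀ hD]
  calc stdNormalPDF t / σ ≤ 8 * (|t| + 1) * (stdNormalCDF t * (1 - stdNormalCDF t)) / σ := by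
        gcongr
        exact stdNormalPDF_le_mul_stdNormalCDF_mul_one_sub t
    _ = 8 * ((|x| + σ) / σ ^ 2) * (stdNormalCDF t * (1 - stdNormalCDF t)) := by
        rw [← ht]; ring
    _ ≤ 8 * (α + σ) / σ ^ 2 * (stdNormalCDF t * (1 - stdNormalCDF t)) := by
        rw [mul_div_assoc]
        gcongr

/-- For `f` the CDF of `N(0, σ²)`: `sup_{|x| ≤ α} |f'(x)|/(f(x)(1 - f(x))) ≤ 8(α + σ)/σ²`. -/
theorem stmt10 (σ α : ℝ) (hσ : 0 < σ) (hα : 0 < α)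
    (f : ℝ → ℝ) (hf : ∀ x, f x = stdNormalCDF (x / σ)) :
    ∀ x, |x| ≤ α → |deriv f x| / (f x * (1 - f x)) ≤ 8 * (α + σ) / σ ^ 2 :=
  stmt10_general σ α hσ f hf
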